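/- arXiv:1911.03946 — 7 statements merged into one kernel-verified Lean document; each statement's English description precedes it below -/
import Mathlib

section
/- If x minimizes ‖x − v‖₂² over the set {x : ‖x‖₁ = t, ‖x‖₂ = 1}, then v_i x_i ≥ 0 for every i. -/
theorem sign_of_projection_onto_sphere_intersection (n : ℕ) (t : ℝ) (v x : Fin n → ℝ)
    (ht1 : 1 < t) (ht2 : t < Real.sqrt n)
    (hfeas : ∑ i, |x i| = t ∧ Real.sqrt (∑ i, (x i) ^ 2) = 1)
    (hmin : ∀ y : Fin n → ℝ, ∑ i, |y i| = t → Real.sqrt (∑ i, (y i) ^ 2) = 1 →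
      ∑ i, (x i - v i) ^ 2 ≤ ∑ i, (y i - v i) ^ 2) :
    ∀ i, v i * x i ≥ 0 := by
  obtain ⟨h1, h2⟩ := hfeas
  intro i
  set y : Fin n → ℝ := Function.update x i (-(x i)) with hy
  have habs : ∀ j, |y j| = |x j| := by
    intro j
    by_cases h : j = i
    · subst h; simp [hy]
    · simp [hy, Function.update_of_ne h]
  have hsq : ∀ j, (y j) ^ 2 = (x j) ^ 2 := by
    intro j
    by_cases h : j = i
    · subst h; simp [hy]
    · simp [hy, Function.update_of_ne h]
  have key := hmin y
    (by rw [Finset.sum_congr rfl fun j _ => habs j]; exact h1)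
    (by rw [Finset.sum_congr rfl fun j _ => hsq j]; exact h2)
  have hdiff : ∑ j, ((y j - v j) ^ 2 - (x j - v j) ^ 2) = 4 * (v i * x i) := by
    rw [Finset.sum_eq_single i]
    · simp only [hy, Function.update_self]; ring
    · intro j _ hj
      simp only [hy, Function.update_of_ne hj]
      ring
    · simp
  have : (0 : ℝ) ≤ 4 * (v i * x i) := by
    rw [← hdiff, Finset.sum_sub_distrib]
    linarith
  linarith
end

section
/- For t > 0, the equation ψ(λ) = 0 has a unique root on (−∞, v_max), where ψ(λ) = Σ_{i=1}^n max(v_i − λ, 0) − t. -/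
/-!
The function `ψ` is continuous and decreasing; it is strictly decreasing on `(-∞, v_max]`, because
the term of an index attaining `v_max` is strictly decreasing there. Since `ψ(v_max) = -t < 0` and
`ψ(v_max - t) ≥ 0`, the intermediate value theorem gives a root in `[v_max - t, v_max)`, and strict
monotonicity makes it unique.
-/

open Set

namespace PsiRoot

variable {ι : Type*} [Fintype ι]

noncomputable def psi (v : ι → ℝ) (t lam : ℝ) : ℝ := ∑ i, max (v i - lam) 0 - t

variable (v : ι → ℝ) (t : ℝ)

theorem continuous_psi : Continuous (psi v t) := by
  unfold psi
  fun_prop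

theorem psi_strictAntiOn (j : ι) : StrictAntiOn (psi v t) (Iic (v j)) := by
  intro a _ b hb hab
  refine sub_lt_sub_right (Finset.sum_lt_sum (fun i _ => ?_) ⟨j, Finset.mem_univ j, ?_⟩) t
  · exact max_le_max_right 0 (by linarith)
  · rw [max_eq_left (sub_nonneg.2 hb), max_eq_left (by linarith [mem_Iic.1 hb])]
    linarith

theorem psi_eq_neg_of_forall_le {c : ℝ} (hc : ∀ i, v i ≤ c) : psi v t c = -t := by
  simp [psi, hc]

theorem sub_sub_le_psi (j : ι) (lam : ℝ) : v j - lam - t ≤ psi v t lam :=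
  sub_le_sub_right ((le_max_left _ _).trans
    (Finset.single_le_sum (f := fun i => max (v i - lam) 0)
      (fun _ _ => le_max_right _ _) (Finset.mem_univ j))) t

end PsiRoot

open PsiRoot in
theorem psi_unique_root (n : ℕ) (t : ℝ) (ht : 0 < t) (v : Fin n → ℝ) (vmax : ℝ)
    (hvmax_le : ∀ i, v i ≤ vmax) (hvmax_mem : ∃ i, v i = vmax) :
    ∃! lam : ℝ, lam < vmax ∧ (∑ i, max (v i - lam) 0) - t = 0 := by
  obtain ⟨j, rfl⟩ := hvmax_mem
  have h_top : psi v t (v j) = -t := psi_eq_neg_of_forall_le v t hvmax_le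
  have h_low : 0 ≤ psi v t (v j - t) := by
    simpa using sub_sub_le_psi v t j (v j - t)
  obtain ⟨lam, ⟨-, hlam_lt⟩, hlam⟩ :=
    intermediate_value_Ico' (by linarith) (continuous_psi v t).continuousOn
      (show (0 : ℝ) ∈ Ioc (psi v t (v j)) (psi v t (v j - t)) from ⟨by linarith, h_low⟩)
  refine ⟨lam, ⟨hlam_lt, hlam⟩, fun mu ⟨hmu_lt, hmu⟩ => ?_⟩
  exact (psi_strictAntiOn v t j).injOn hmu_lt.le hlam_lt.le
    ((hmu : psi v t mu = 0).trans hlam.symm)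
end

section
/- For consecutive distinct values λ_{j−1} > λ_j of v, the quadratics φ_{j−1} and φ_j agree at λ_j: φ_j(λ_j) = φ_{j−1}(λ_j). Moreover, if I_j ≥ t² then φ_j(λ) > φ_{j−1}(λ) for all λ < λ_j. -/
theorem quadratics_agree_and_dominate (n : ℕ) (t : ℝ) (ht : 0 < t) (v : Fin n → ℝ)
    (lam' lam : ℝ) (hlt : lam < lam')
    (hmem' : ∃ i, v i = lam') (hmem : ∃ i, v i = lam)
    (hgap : ∀ i, ¬ (lam < v i ∧ v i < lam'))
    (I' I : ℕ) (s' s w' w : ℝ)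
    (hI' : I' = (Finset.univ.filter fun i => lam' ≤ v i).card)
    (hs' : s' = ∑ i ∈ Finset.univ.filter fun i => lam' ≤ v i, v i)
    (hw' : w' = ∑ i ∈ Finset.univ.filter fun i => lam' ≤ v i, (v i) ^ 2)
    (hI : I = (Finset.univ.filter fun i => lam ≤ v i).card)
    (hs : s = ∑ i ∈ Finset.univ.filter fun i => lam ≤ v i, v i)
    (hw : w = ∑ i ∈ Finset.univ.filter fun i => lam ≤ v i, (v i) ^ 2) :
    (((I : ℝ) - t ^ 2) * ((I : ℝ) * lam - 2 * s) * lam + s ^ 2 - t ^ 2 * w =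
      ((I' : ℝ) - t ^ 2) * ((I' : ℝ) * lam - 2 * s') * lam + s' ^ 2 - t ^ 2 * w') ∧
    ((I : ℝ) ≥ t ^ 2 → ∀ x < lam,
      ((I : ℝ) - t ^ 2) * ((I : ℝ) * x - 2 * s) * x + s ^ 2 - t ^ 2 * w >
      ((I' : ℝ) - t ^ 2) * ((I' : ℝ) * x - 2 * s') * x + s' ^ 2 - t ^ 2 * w') := by
  classical
  set S' := Finset.univ.filter fun i => lam' ≤ v i with hS'
  set S := Finset.univ.filter fun i => lam ≤ v i with hSdef
  have hsub : S' ⊆ S := by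
    intro i hi
    simp only [hS', hSdef, Finset.mem_filter, Finset.mem_univ, true_and] at *
    linarith
  have hD : ∀ i ∈ S \ S', v i = lam := by
    intro i hi
    simp only [hS', hSdef, Finset.mem_sdiff, Finset.mem_filter, Finset.mem_univ,
      true_and, not_le] at hi
    rcases hi with ⟨h1, h2⟩
    rcases eq_or_lt_of_le h1 with h | h
    · exact h.symm
    · exact absurd ⟨h, h2⟩ (hgap i)
  set k := (S \ S').card with hk
  -- cardinality relation
  have hcard : S'.card + k = S.card := by
    rw [hk, add_comm]
    exact Finset.card_sdiff_add_card_eq_card hsub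
  have hIR : (I : ℝ) = (I' : ℝ) + (k : ℝ) := by
    rw [hI, hI', ← hcard]; push_cast; ring
  -- sum relations
  have hsum_v : ∑ i ∈ S \ S', v i = (k : ℝ) * lam := by
    rw [Finset.sum_congr rfl hD, Finset.sum_const, nsmul_eq_mul]
  have hsum_v2 : ∑ i ∈ S \ S', (v i) ^ 2 = (k : ℝ) * lam ^ 2 := by
    have : ∀ i ∈ S \ S', (v i) ^ 2 = lam ^ 2 := fun i hi => by rw [hD i hi]
    rw [Finset.sum_congr rfl this, Finset.sum_const, nsmul_eq_mul]
  have hsR : s = s' + (k : ℝ) * lam := by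
    rw [hs, hs', ← Finset.sum_sdiff hsub, hsum_v]; ring
  have hwR : w = w' + (k : ℝ) * lam ^ 2 := by
    rw [hw, hw', ← Finset.sum_sdiff hsub, hsum_v2]; ring
  -- k ≥ 1
  have hk1 : 1 ≤ k := by
    obtain ⟨i0, hi0⟩ := hmem
    have : i0 ∈ S \ S' := by
      simp only [hS', hSdef, Finset.mem_sdiff, Finset.mem_filter, Finset.mem_univ,
        true_and, not_le, hi0]
      exact ⟨le_refl _, hlt⟩
    exact Finset.card_pos.mpr ⟨i0, this⟩
  have hk1R : (1 : ℝ) ≤ (k : ℝ) := by exact_mod_cast hk1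
  -- I' ≥ 1
  have hI'1 : 1 ≤ I' := by
    obtain ⟨i1, hi1⟩ := hmem'
    have : i1 ∈ S' := by
      simp only [hS', Finset.mem_filter, Finset.mem_univ, true_and, hi1, le_refl]
    rw [hI']
    exact Finset.card_pos.mpr ⟨i1, this⟩
  have hI'1R : (1 : ℝ) ≤ (I' : ℝ) := by exact_mod_cast hI'1
  -- s' ≥ I' * lam'
  have hs'ge : (I' : ℝ) * lam' ≤ s' := by
    rw [hs', hI']
    have := Finset.card_nsmul_le_sum S' v lam'
      (fun i hi => by simpa [hS', Finset.mem_filter] using hi)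
    simpa [nsmul_eq_mul] using this
  constructor
  · rw [hIR, hsR, hwR]; ring
  · intro hIt x hx
    rw [hIR, hsR, hwR]
    have hxl : 0 < lam - x := by linarith
    have hA : (1 : ℝ) ≤ 2 * (I' : ℝ) + (k : ℝ) - t ^ 2 := by
      rw [hIR] at hIt; linarith
    have hslam : (I' : ℝ) * lam < s' := by nlinarith
    have hp1 : 0 ≤ (k : ℝ) * ((2 * (I' : ℝ) + (k : ℝ) - t ^ 2) * (x - lam) ^ 2) := by
      apply mul_nonneg (by linarith)
      apply mul_nonneg (by linarith) (sq_nonneg _)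
    have hp2 : 0 < (k : ℝ) * ((s' - (I' : ℝ) * lam) * (lam - x)) := by
      apply mul_pos (by linarith)
      exact mul_pos (by linarith) hxl
    nlinarith [hp1, hp2]
end

section
/- Let I₁ = #{i : v_i = v_max}. If I₁ > t², then φ(λ) > 0 for all λ ∈ (−∞, v_max), where φ(λ) = ‖(v − λ𝟏)⁺‖₁² − t²‖(v − λ𝟏)⁺‖₂². -/
theorem phi_positive_when_I1_gt_tsq (n : ℕ) (t : ℝ) (ht : 0 < t) (htn : t ^ 2 ≤ n)
    (v : Fin n → ℝ) (vmax : ℝ)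
    (hvmax_le : ∀ i, v i ≤ vmax) (hvmax_mem : ∃ i, v i = vmax)
    (hI1 : (((Finset.univ.filter fun i => v i = vmax).card : ℝ)) > t ^ 2) :
    ∀ lam < vmax,
      (∑ i, max (v i - lam) 0) ^ 2 - t ^ 2 * ∑ i, (max (v i - lam) 0) ^ 2 > 0 := by
  intro lam hlam
  set M := vmax - lam with hM
  have hMpos : 0 < M := by simp [hM]; linarith
  set a : Fin n → ℝ := fun i => max (v i - lam) 0 with ha
  have ha0 : ∀ i, 0 ≤ a i := fun i => le_max_right _ _
  have haM : ∀ i, a i ≤ M := fun i => max_le (by have := hvmax_le i; simp [hM]; linarith) hMpos.le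
  set S := Finset.univ.filter fun i => v i = vmax with hS
  have hA : (S.card : ℝ) * M ≤ ∑ i, a i := by
    calc (S.card : ℝ) * M = ∑ _i ∈ S, M := by rw [Finset.sum_const, nsmul_eq_mul]
    _ = ∑ i ∈ S, a i := Finset.sum_congr rfl (fun i hi => by
        simp only [hS, Finset.mem_filter] at hi
        simp [ha, hM, hi.2, hlam.le])
    _ ≤ ∑ i, a i := Finset.sum_le_sum_of_subset_of_nonneg (Finset.subset_univ S)
        (fun i _ _ => ha0 i)
  have ht2M : t ^ 2 * M < ∑ i, a i := lt_of_lt_of_le (by nlinarith) hA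
  have hApos : 0 < ∑ i, a i := lt_of_lt_of_le (by positivity) ht2M.le
  have hB : ∑ i, a i ^ 2 ≤ M * ∑ i, a i := by
    rw [Finset.mul_sum]
    exact Finset.sum_le_sum fun i _ => by nlinarith [ha0 i, haM i]
  nlinarith [ht2M, hApos, hB, sq_nonneg t]
end

section
/- Let I₁ = #{i : v_i = v_max} and let λ₂ be the second-largest distinct value of v. If I₁ = t², then φ(λ) ≡ 0 on [λ₂, v_max) and φ(λ) > 0 for λ < λ₂, where φ(λ) = ‖(v − λ𝟏)⁺‖₁² − t²‖(v − λ𝟏)⁺‖₂². -/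
theorem phi_when_I1_eq_tsq (n : ℕ) (t : ℝ) (ht : 0 < t)
    (v : Fin n → ℝ) (vmax lam2 : ℝ)
    (hvmax_le : ∀ i, v i ≤ vmax) (hvmax_mem : ∃ i, v i = vmax)
    (hlam2_lt : lam2 < vmax) (hlam2_mem : ∃ i, v i = lam2)
    (hlam2_second : ∀ i, v i ≤ lam2 ∨ v i = vmax)
    (hI1 : (((Finset.univ.filter fun i => v i = vmax).card : ℝ)) = t ^ 2) :
    (∀ lam ∈ Set.Ico lam2 vmax,
      (∑ i, max (v i - lam) 0) ^ 2 - t ^ 2 * ∑ i, (max (v i - lam) 0) ^ 2 = 0) ∧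
    (∀ lam < lam2,
      (∑ i, max (v i - lam) 0) ^ 2 - t ^ 2 * ∑ i, (max (v i - lam) 0) ^ 2 > 0) := by
  classical
  set A := Finset.univ.filter (fun i => v i = vmax) with hA
  set N := Finset.univ.filter (fun i => ¬ v i = vmax) with hN
  have hsplit : ∀ f : Fin n → ℝ, ∑ i, f i = ∑ i ∈ A, f i + ∑ i ∈ N, f i := by
    intro f
    rw [hA, hN, Finset.sum_filter_add_sum_filter_not]
  have hsumA : ∀ lam, lam < vmax →
      ∑ i ∈ A, max (v i - lam) 0 = (A.card : ℝ) * (vmax - lam) := by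
    intro lam hlam
    rw [Finset.sum_congr rfl (fun i hi => ?_), Finset.sum_const, nsmul_eq_mul]
    have hv : v i = vmax := (Finset.mem_filter.mp hi).2
    rw [hv, max_eq_left (by linarith)]
  have hsumA2 : ∀ lam, lam < vmax →
      ∑ i ∈ A, (max (v i - lam) 0) ^ 2 = (A.card : ℝ) * (vmax - lam) ^ 2 := by
    intro lam hlam
    rw [Finset.sum_congr rfl (fun i hi => ?_), Finset.sum_const, nsmul_eq_mul]
    have hv : v i = vmax := (Finset.mem_filter.mp hi).2
    rw [hv, max_eq_left (by linarith)]
  have hNle : ∀ i ∈ N, v i ≤ lam2 := by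
    intro i hi
    exact (hlam2_second i).resolve_right (Finset.mem_filter.mp hi).2
  constructor
  · intro lam hlam
    obtain ⟨hge, hlt⟩ := hlam
    have e2 : ∑ i ∈ N, max (v i - lam) 0 = 0 := by
      apply Finset.sum_eq_zero
      intro i hi
      exact max_eq_right (by have := hNle i hi; linarith)
    have e3 : ∑ i ∈ N, (max (v i - lam) 0) ^ 2 = 0 := by
      apply Finset.sum_eq_zero
      intro i hi
      rw [max_eq_right (by have := hNle i hi; linarith)]
      ring
    rw [hsplit, hsplit, hsumA lam hlt, hsumA2 lam hlt, e2, e3, hI1]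
    ring
  · intro lam hlam
    have hd0 : 0 < lam2 - lam := by linarith
    obtain ⟨j, hj⟩ := hlam2_mem
    have hjN : j ∈ N := by
      simp only [hN, Finset.mem_filter, Finset.mem_univ, true_and]
      rw [hj]; linarith
    set B := ∑ i ∈ N, max (v i - lam) 0 with hB
    set C := ∑ i ∈ N, (max (v i - lam) 0) ^ 2 with hC
    have hBpos : lam2 - lam ≤ B := by
      have h : max (v j - lam) 0 ≤ B :=
        Finset.single_le_sum (f := fun i => max (v i - lam) 0) (fun i _ => le_max_right _ _) hjN
      rwa [hj, max_eq_left (by linarith)] at h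
    have hCle : C ≤ B * (lam2 - lam) := by
      rw [hC, hB, Finset.sum_mul]
      apply Finset.sum_le_sum
      intro i hi
      have h1 : max (v i - lam) 0 ≤ lam2 - lam :=
        max_le (by have := hNle i hi; linarith) (le_of_lt hd0)
      have h2 : (0:ℝ) ≤ max (v i - lam) 0 := le_max_right _ _
      calc (max (v i - lam) 0) ^ 2 = max (v i - lam) 0 * max (v i - lam) 0 := sq _
        _ ≤ max (v i - lam) 0 * (lam2 - lam) := by
            exact mul_le_mul_of_nonneg_left h1 h2
    have hlt : lam < vmax := by linarith
    have hc : (0:ℝ) < t ^ 2 := by positivity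
    rw [hsplit, hsplit, hsumA lam hlt, hsumA2 lam hlt, hI1, ← hB, ← hC]
    nlinarith [mul_pos hc (lt_of_lt_of_le hd0 hBpos), mul_pos hc hd0,
      mul_le_mul_of_nonneg_left hCle (le_of_lt hc),
      mul_pos (mul_pos hc (lt_of_lt_of_le hd0 hBpos)) (show (0:ℝ) < vmax - lam by linarith),
      sq_nonneg B]
end

section
/- Let v ∈ R^n with ‖v⁺‖₂ > 1 and ‖v⁺‖₁ ≤ t‖v⁺‖₂. Then x = v⁺/‖v⁺‖₂ is the unique minimizer of (1/2)‖x − v‖₂² over {x ∈ R^n : x ≥ 0, ‖x‖₁ ≤ t, ‖x‖₂ ≤ 1}. -/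
lemma sum_sq_sub_expand (n : ℕ) (a b : Fin n → ℝ) :
    ∑ i, (a i - b i) ^ 2 =
      ∑ i, (a i) ^ 2 - 2 * ∑ i, a i * b i + ∑ i, (b i) ^ 2 := by
  have h : ∀ i ∈ Finset.univ, (a i - b i) ^ 2 = (a i ^ 2 - 2 * (a i * b i)) + b i ^ 2 :=
    fun i _ => by ring
  rw [Finset.sum_congr rfl h, Finset.sum_add_distrib, Finset.sum_sub_distrib,
    ← Finset.mul_sum]

theorem projection_is_normalized_positive_part (n : ℕ) (t : ℝ) (ht : 1 ≤ t) (v : Fin n → ℝ)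
    (h2 : Real.sqrt (∑ i, (max (v i) 0) ^ 2) > 1)
    (h1 : ∑ i, |max (v i) 0| ≤ t * Real.sqrt (∑ i, (max (v i) 0) ^ 2)) :
    (((∀ i, 0 ≤ max (v i) 0 / Real.sqrt (∑ j, (max (v j) 0) ^ 2)) ∧
      ∑ i, |max (v i) 0 / Real.sqrt (∑ j, (max (v j) 0) ^ 2)| ≤ t ∧
      Real.sqrt (∑ i, (max (v i) 0 / Real.sqrt (∑ j, (max (v j) 0) ^ 2)) ^ 2) ≤ 1)) ∧
    ∀ y : Fin n → ℝ, (∀ i, 0 ≤ y i) → ∑ i, |y i| ≤ t →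
      Real.sqrt (∑ i, (y i) ^ 2) ≤ 1 →
      y ≠ (fun i => max (v i) 0 / Real.sqrt (∑ j, (max (v j) 0) ^ 2)) →
      (1 / 2) * ∑ i, (max (v i) 0 / Real.sqrt (∑ j, (max (v j) 0) ^ 2) - v i) ^ 2 <
        (1 / 2) * ∑ i, (y i - v i) ^ 2 := by
  set s : ℝ := Real.sqrt (∑ j, (max (v j) 0) ^ 2) with hs_def
  have hs1 : 1 < s := h2
  have hs0 : 0 < s := by linarith
  have hSnn : (0:ℝ) ≤ ∑ j, (max (v j) 0) ^ 2 :=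
    Finset.sum_nonneg fun i _ => sq_nonneg _
  have hS : s ^ 2 = ∑ j, (max (v j) 0) ^ 2 := Real.sq_sqrt hSnn
  -- ∑ x_i^2 = 1
  have hx2 : ∑ i, (max (v i) 0 / s) ^ 2 = 1 := by
    simp only [div_pow]
    rw [← Finset.sum_div, ← hS]
    field_simp
  -- ⟨v⁺, v⟩ = ∑ v⁺²
  have hvv : ∑ i, max (v i) 0 * v i = ∑ i, (max (v i) 0) ^ 2 := by
    refine Finset.sum_congr rfl fun i _ => ?_
    rcases le_or_gt (v i) 0 with h | h
    · simp [max_eq_right h]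
    · rw [max_eq_left h.le]; ring
  refine ⟨⟨fun i => div_nonneg (le_max_right _ _) hs0.le, ?_, ?_⟩, ?_⟩
  · -- ℓ1 feasibility
    have : ∑ i, |max (v i) 0 / s| = (∑ i, |max (v i) 0|) / s := by
      rw [Finset.sum_div]
      exact Finset.sum_congr rfl fun i _ => by
        rw [abs_div, abs_of_pos hs0]
    rw [this, div_le_iff₀ hs0]
    exact h1
  · -- ℓ2 feasibility
    rw [hx2, Real.sqrt_one]
  · -- optimality
    intro y hy0 _ hy2 hne
    have hAnn : (0:ℝ) ≤ ∑ i, (y i) ^ 2 := Finset.sum_nonneg fun i _ => sq_nonneg _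
    have hA : ∑ i, (y i) ^ 2 ≤ 1 := by
      have := Real.sq_sqrt hAnn
      nlinarith [Real.sqrt_nonneg (∑ i, (y i) ^ 2)]
    -- ⟨y, v⟩ ≤ ⟨y, v⁺⟩
    have hyv : ∑ i, y i * v i ≤ ∑ i, y i * max (v i) 0 :=
      Finset.sum_le_sum fun i _ =>
        mul_le_mul_of_nonneg_left (le_max_left _ _) (hy0 i)
    -- ⟨y, v⁺⟩ = s * ⟨y, x⟩
    have hyx : ∑ i, y i * max (v i) 0 = s * ∑ i, y i * (max (v i) 0 / s) := by
      rw [Finset.mul_sum]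
      exact Finset.sum_congr rfl fun i _ => by field_simp
    -- d² > 0
    have hd : 0 < ∑ i, (y i - max (v i) 0 / s) ^ 2 := by
      obtain ⟨i, hi⟩ := Function.ne_iff.mp hne
      refine Finset.sum_pos' (fun j _ => sq_nonneg _) ⟨i, Finset.mem_univ i, ?_⟩
      exact pow_pos (abs_pos.mpr (sub_ne_zero.mpr hi)) 2 |>.trans_eq (sq_abs _)
    have e1 := sum_sq_sub_expand n (fun i => max (v i) 0 / s) v
    have e2 := sum_sq_sub_expand n y v
    have e3 := sum_sq_sub_expand n y (fun i => max (v i) 0 / s)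
    -- ⟨x, v⟩ = s
    have hxv : ∑ i, max (v i) 0 / s * v i = s := by
      have : ∑ i, max (v i) 0 / s * v i = (∑ i, max (v i) 0 * v i) / s := by
        rw [Finset.sum_div]
        exact Finset.sum_congr rfl fun i _ => by ring
      rw [this, hvv, ← hS]
      field_simp
    rw [hx2] at e1 e3
    rw [hxv] at e1
    nlinarith [hd, hA, hs1, hyv, hyx, e1, e2, e3]
end

section
/- Let v ∈ R^n_+ satisfy ‖v‖₁ > t, ‖v‖₁ > t‖v‖₂, and ‖(v − λ̂𝟏)⁺‖₂ > 1, where λ̂ is the unique root of ψ(λ) = Σ_i max(v_i − λ, 0) − t. Set λ̃ = (‖v‖₁ − t‖v‖₂)/n. Then λ̃ > 0, φ(λ̃) > 0, and φ(λ̂) < 0, where φ(λ) = ‖(v − λ𝟏)⁺‖₁² − t²‖(v − λ𝟏)⁺‖₂²; in particular the unique root λ* of φ on (0, v_max) lies in (λ̃, λ̂). -/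
/-!
Write `φ(λ) = ‖(v - λ)⁺‖₁² - t² ‖(v - λ)⁺‖₂²`.

For `0 < λ ≤ λ̃`, the `ℓ₁` norm of `(v - λ)⁺` is at least `‖v‖₁ - nλ ≥ t ‖v‖₂`, while its `ℓ₂` norm
is strictly below `‖v‖₂`; hence `φ(λ) > 0`.

For `λ ≥ λ̂`, put `a = (v - λ̂)⁺` and `δ = λ - λ̂`, so that `(v - λ)⁺ = (a - δ)⁺`. Soft thresholding
does not increase the ratio `‖·‖₁² / ‖·‖₂²`: this is a product of two weighted Chebyshev
inequalities, both resting on the fact that `(aᵢ - δ)⁺ / aᵢ` increases with `aᵢ`. Since `‖a‖₁ = t`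
and `‖a‖₂ > 1`, this gives `φ(λ) < 0` as long as `(v - λ)⁺ ≠ 0`, i.e. `λ < v_max`.
-/

open Finset

variable {ι : Type*} [Fintype ι]

theorem sum_mul_sum_le_sum_mul_sum_of_add_le {p q r s : ι → ℝ}
    (h : ∀ i j, p i * q j + p j * q i ≤ r i * s j + r j * s i) :
    (∑ i, p i) * ∑ i, q i ≤ (∑ i, r i) * ∑ i, s i := by
  have hsymm (f g : ι → ℝ) : 2 * ((∑ i, f i) * ∑ i, g i) = ∑ i, ∑ j, (f i * g j + f j * g i) := by
    simp only [sum_add_distrib, sum_mul_sum]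
    rw [sum_comm (f := fun i j => f j * g i)]
    ring
  have := hsymm p q ▸ hsymm r s ▸ sum_le_sum fun i _ => sum_le_sum fun j _ => h i j
  linarith

theorem mul_max_sub_le_mul_max_sub {x y δ : ℝ} (hx : 0 ≤ x) (hxy : x ≤ y) (hδ : 0 ≤ δ) :
    y * max (x - δ) 0 ≤ x * max (y - δ) 0 := by
  rcases le_total x δ with hxδ | hδx
  · rw [max_eq_right (by linarith)]
    simpa using mul_nonneg hx (le_max_right (y - δ) 0)
  · rw [max_eq_left (by linarith), max_eq_left (by linarith)]
    nlinarith

theorem sum_sq_mul_sq_sum_max_sub_le {a : ι → ℝ} {δ : ℝ} (ha : ∀ i, 0 ≤ a i) (hδ : 0 ≤ δ) :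
    (∑ i, a i ^ 2) * (∑ i, max (a i - δ) 0) ^ 2
      ≤ (∑ i, a i) ^ 2 * ∑ i, max (a i - δ) 0 ^ 2 := by
  set b : ι → ℝ := fun i => max (a i - δ) 0
  have hpair : ∀ i j, 0 ≤ (a j - a i) * (a i * b j - a j * b i) ∧
      0 ≤ (b j - b i) * (a i * b j - a j * b i) := by
    intro i j
    rcases le_total (a i) (a j) with hij | hji
    · have hcross := mul_max_sub_le_mul_max_sub (ha i) hij hδ
      have hb : b i ≤ b j := max_le_max (by linarith) le_rfl
      exact ⟨mul_nonneg (by linarith) (by linarith), mul_nonneg (by linarith) (by linarith)⟩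
    · have hcross := mul_max_sub_le_mul_max_sub (ha j) hji hδ
      have hb : b j ≤ b i := max_le_max (by linarith) le_rfl
      exact ⟨mul_nonneg_of_nonpos_of_nonpos (by linarith) (by linarith),
        mul_nonneg_of_nonpos_of_nonpos (by linarith) (by linarith)⟩
  have hsa : 0 ≤ ∑ i, a i := sum_nonneg fun i _ => ha i
  have hsb : 0 ≤ ∑ i, b i := sum_nonneg fun i _ => le_max_right _ _
  have h1 : (∑ i, a i ^ 2) * ∑ i, b i ≤ (∑ i, a i) * ∑ i, a i * b i :=
    sum_mul_sum_le_sum_mul_sum_of_add_le fun i j => by linear_combination (hpair i j).1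
  have h2 : (∑ i, a i * b i) * ∑ i, b i ≤ (∑ i, a i) * ∑ i, b i ^ 2 :=
    sum_mul_sum_le_sum_mul_sum_of_add_le fun i j => by linear_combination (hpair i j).2
  calc (∑ i, a i ^ 2) * (∑ i, b i) ^ 2 = ((∑ i, a i ^ 2) * ∑ i, b i) * ∑ i, b i := by ring
    _ ≤ ((∑ i, a i) * ∑ i, a i * b i) * ∑ i, b i := by gcongr
    _ = (∑ i, a i) * ((∑ i, a i * b i) * ∑ i, b i) := by ring
    _ ≤ (∑ i, a i) * ((∑ i, a i) * ∑ i, b i ^ 2) := by gcongr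
    _ = (∑ i, a i) ^ 2 * ∑ i, b i ^ 2 := by ring

theorem sum_max_sub_pos_iff {v : ι → ℝ} {lam : ℝ} :
    0 < ∑ i, max (v i - lam) 0 ↔ ∃ i, lam < v i := by
  rw [sum_pos_iff_of_nonneg fun i _ => le_max_right _ _]
  simp

theorem sum_sub_card_mul_le_sum_max_sub (v : ι → ℝ) (lam : ℝ) :
    ∑ i, v i - Fintype.card ι * lam ≤ ∑ i, max (v i - lam) 0 := by
  simpa [sum_sub_distrib] using sum_le_sum fun i (_ : i ∈ univ) => le_max_left (v i - lam) 0

theorem sum_max_sub_sq_lt_sum_sq {v : ι → ℝ} {lam : ℝ} (hv : ∀ i, 0 ≤ v i) (hlam : 0 < lam)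
    (hpos : 0 < ∑ i, v i) : ∑ i, max (v i - lam) 0 ^ 2 < ∑ i, v i ^ 2 := by
  obtain ⟨i₀, -, hi₀⟩ := (sum_pos_iff_of_nonneg fun i _ => hv i).1 hpos
  refine sum_lt_sum (fun i _ => ?_) ⟨i₀, mem_univ _, ?_⟩
  · exact pow_le_pow_left₀ (le_max_right _ _) (max_le (by linarith [hv i]) (hv i)) 2
  · exact pow_lt_pow_left₀ (max_lt (by linarith) hi₀) (le_max_right _ _) two_ne_zero

theorem max_max_sub_sub_eq {x a b : ℝ} (hab : a ≤ b) :
    max (max (x - a) 0 - (b - a)) 0 = max (x - b) 0 := by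
  rcases le_total x a with hxa | hax
  · rw [max_eq_right (sub_nonpos.2 hxa), max_eq_right (by linarith), max_eq_right (by linarith)]
  · rw [max_eq_left (sub_nonneg.2 hax), sub_sub_sub_cancel_right]

theorem sq_mul_sum_sq_lt_sq_sum_max_sub {v : ι → ℝ} {t lam : ℝ} (hv : ∀ i, 0 ≤ v i)
    (ht : 0 < t) (hlam : 0 < lam) (hpos : 0 < ∑ i, v i)
    (hle : Fintype.card ι * lam + t * √(∑ i, v i ^ 2) ≤ ∑ i, v i) :
    t ^ 2 * ∑ i, max (v i - lam) 0 ^ 2 < (∑ i, max (v i - lam) 0) ^ 2 := by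
  have hl1 : t * √(∑ i, v i ^ 2) ≤ ∑ i, max (v i - lam) 0 := by
    linarith [sum_sub_card_mul_le_sum_max_sub v lam]
  calc t ^ 2 * ∑ i, max (v i - lam) 0 ^ 2 < t ^ 2 * ∑ i, v i ^ 2 :=
        mul_lt_mul_of_pos_left (sum_max_sub_sq_lt_sum_sq hv hlam hpos) (by positivity)
    _ = (t * √(∑ i, v i ^ 2)) ^ 2 := by
        rw [mul_pow, Real.sq_sqrt (sum_nonneg fun i _ => sq_nonneg _)]
    _ ≤ (∑ i, max (v i - lam) 0) ^ 2 := by gcongr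

theorem sq_sum_max_sub_lt_sq_mul_sum_sq {v : ι → ℝ} {t lam₀ lam : ℝ}
    (hl1 : ∑ i, max (v i - lam₀) 0 = t) (hl2 : 1 < ∑ i, max (v i - lam₀) 0 ^ 2)
    (hlam : lam₀ ≤ lam) (hpos : 0 < ∑ i, max (v i - lam) 0) :
    (∑ i, max (v i - lam) 0) ^ 2 < t ^ 2 * ∑ i, max (v i - lam) 0 ^ 2 := by
  have hshift : ∀ i, max (v i - lam) 0 = max (max (v i - lam₀) 0 - (lam - lam₀)) 0 :=
    fun i => (max_max_sub_sub_eq hlam).symm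
  have key := sum_sq_mul_sq_sum_max_sub_le (fun i => le_max_right (v i - lam₀) 0)
    (sub_nonneg.2 hlam)
  simp only [← hshift, hl1] at key
  calc (∑ i, max (v i - lam) 0) ^ 2
      < (∑ i, max (v i - lam₀) 0 ^ 2) * (∑ i, max (v i - lam) 0) ^ 2 := by
        nlinarith [pow_pos hpos 2]
    _ ≤ t ^ 2 * ∑ i, max (v i - lam) 0 ^ 2 := key

theorem bounding_the_root_general (n : ℕ) (t : ℝ)
    (v : Fin n → ℝ) (hv : ∀ i, 0 ≤ v i) (vmax : ℝ)
    (hvmax_le : ∀ i, v i ≤ vmax) (hvmax_mem : ∃ i, v i = vmax)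
    (h2 : ∑ i, v i > t * Real.sqrt (∑ i, (v i) ^ 2))
    (lamhat : ℝ) (hlamhat : (∑ i, max (v i - lamhat) 0) - t = 0)
    (h3 : Real.sqrt (∑ i, (max (v i - lamhat) 0) ^ 2) > 1)
    (lamtilde : ℝ)
    (hlamtilde : lamtilde = ((∑ i, v i) - t * Real.sqrt (∑ i, (v i) ^ 2)) / n) :
    0 < lamtilde ∧
    (∑ i, max (v i - lamtilde) 0) ^ 2 - t ^ 2 * ∑ i, (max (v i - lamtilde) 0) ^ 2 > 0 ∧
    (∑ i, max (v i - lamhat) 0) ^ 2 - t ^ 2 * ∑ i, (max (v i - lamhat) 0) ^ 2 < 0 ∧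
    ∀ lam : ℝ, 0 < lam → lam < vmax →
      (∑ i, max (v i - lam) 0) ^ 2 - t ^ 2 * ∑ i, (max (v i - lam) 0) ^ 2 = 0 →
      lamtilde < lam ∧ lam < lamhat := by
  have hsum_hat : ∑ i, max (v i - lamhat) 0 = t := by linarith
  have hsq_hat : 1 < ∑ i, max (v i - lamhat) 0 ^ 2 := by
    rwa [gt_iff_lt, Real.lt_sqrt zero_le_one, one_pow] at h3
  have ht : 0 < t := by
    have ht_nonneg : 0 ≤ t := hsum_hat ▸ sum_nonneg fun i _ => le_max_right _ _
    have ht_sq : 1 < t ^ 2 :=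
      hsum_hat ▸ hsq_hat.trans_le (sum_sq_le_sq_sum_of_nonneg fun i _ => le_max_right _ _)
    nlinarith
  have hpos : 0 < ∑ i, v i := lt_of_le_of_lt (by positivity) h2
  have hn : (0 : ℝ) < n := Nat.cast_pos.2 (Nat.pos_of_ne_zero (by rintro rfl; simp at hpos))
  have hlamtilde_pos : 0 < lamtilde := by rw [hlamtilde]; exact div_pos (by linarith) hn
  have lower : ∀ lam, 0 < lam → lam ≤ lamtilde →
      t ^ 2 * ∑ i, max (v i - lam) 0 ^ 2 < (∑ i, max (v i - lam) 0) ^ 2 := by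
    intro lam hlam hle
    refine sq_mul_sum_sq_lt_sq_sum_max_sub hv ht hlam hpos ?_
    rw [Fintype.card_fin]
    have : n * lamtilde = ∑ i, v i - t * √(∑ i, v i ^ 2) := by
      rw [hlamtilde]; field_simp
    linarith [mul_le_mul_of_nonneg_left hle hn.le]
  have upper : ∀ lam, lamhat ≤ lam → lam < vmax →
      (∑ i, max (v i - lam) 0) ^ 2 < t ^ 2 * ∑ i, max (v i - lam) 0 ^ 2 := by
    intro lam hle hlt
    obtain ⟨i₀, hi₀⟩ := hvmax_mem
    exact sq_sum_max_sub_lt_sq_mul_sum_sq hsum_hat hsq_hat hle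
      (sum_max_sub_pos_iff.2 ⟨i₀, hi₀ ▸ hlt⟩)
  have hlamhat_lt : lamhat < vmax := by
    obtain ⟨i, hi⟩ := sum_max_sub_pos_iff.1 (hsum_hat ▸ ht)
    exact hi.trans_le (hvmax_le i)
  refine ⟨hlamtilde_pos, sub_pos.2 (lower _ hlamtilde_pos le_rfl),
    sub_neg.2 (upper _ le_rfl hlamhat_lt), fun lam hlam hlt hroot => ⟨?_, ?_⟩⟩
  · by_contra! hle
    exact (sub_pos.2 (lower lam hlam hle)).ne' hroot
  · by_contra! hge
    exact (sub_neg.2 (upper lam hge hlt)).ne hroot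

theorem bounding_the_root (n : ℕ) (t : ℝ) (ht1 : 1 < t) (ht2 : t < Real.sqrt n)
    (v : Fin n → ℝ) (hv : ∀ i, 0 ≤ v i) (vmax : ℝ)
    (hvmax_le : ∀ i, v i ≤ vmax) (hvmax_mem : ∃ i, v i = vmax)
    (h1 : ∑ i, v i > t)
    (h2 : ∑ i, v i > t * Real.sqrt (∑ i, (v i) ^ 2))
    (lamhat : ℝ) (hlamhat : (∑ i, max (v i - lamhat) 0) - t = 0)
    (h3 : Real.sqrt (∑ i, (max (v i - lamhat) 0) ^ 2) > 1)
    (lamtilde : ℝ)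
    (hlamtilde : lamtilde = ((∑ i, v i) - t * Real.sqrt (∑ i, (v i) ^ 2)) / n) :
    0 < lamtilde ∧
    (∑ i, max (v i - lamtilde) 0) ^ 2 - t ^ 2 * ∑ i, (max (v i - lamtilde) 0) ^ 2 > 0 ∧
    (∑ i, max (v i - lamhat) 0) ^ 2 - t ^ 2 * ∑ i, (max (v i - lamhat) 0) ^ 2 < 0 ∧
    ∀ lam : ℝ, 0 < lam → lam < vmax →
      (∑ i, max (v i - lam) 0) ^ 2 - t ^ 2 * ∑ i, (max (v i - lam) 0) ^ 2 = 0 →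
      lamtilde < lam ∧ lam < lamhat :=
  bounding_the_root_general n t v hv vmax hvmax_le hvmax_mem h2 lamhat hlamhat h3 lamtilde hlamtilde
end
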